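/- Let G be a connected graph and let T_1 and T_2 be two search trees on G. Then there exists a finite sequence of rotations transforming T_1 into T_2; that is, the rotation graph of search trees on G is connected. -/

import Mathlib

/-- A rooted tree (or the empty tree) on a subset `supp` of the vertex type `V`,
represented by parent pointers. -/
structure RTree (V : Type) where
  supp : Finset V
  parent : V → Option V
  parent_eq_none : ∀ v ∉ supp, parent v = none
  mem_of_parent : ∀ {v w : V}, parent v = some w → v ∈ supp ∧ w ∈ supp
  root_unique : ∀ v ∈ supp, ∀ w ∈ supp, parent v = none → parent w = none → v = w
  reaches_root : ∀ v ∈ supp, ∃ r ∈ supp, parent r = none ∧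
    Relation.ReflTransGen (fun a b => parent a = some b) v r

namespace RTree

variable {V : Type}

/-- `T.Anc a v` : `a` is an ancestor of `v` in `T` (possibly `a = v`). -/
def Anc (T : RTree V) (a v : V) : Prop :=
  Relation.ReflTransGen (fun x y => T.parent x = some y) v a

/-- `a` is a strict ancestor of `v`. -/
def StrictAnc (T : RTree V) (a v : V) : Prop := a ≠ v ∧ T.Anc a v

/-- The set of vertices of the subtree rooted at `a` (the descendants of `a`). -/
def descSet (T : RTree V) (a : V) : Set V := {v | T.Anc a v}

/-- The depth of a node: the number of nodes on the path from the root to it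
(the root has depth 1). -/
noncomputable def depth (T : RTree V) (v : V) : ℕ := Set.ncard {a | T.Anc a v}

def IsRoot (T : RTree V) (r : V) : Prop := r ∈ T.supp ∧ T.parent r = none

end RTree

/-- The restriction of a graph to a set of vertices (keeping the ambient vertex type). -/
def restrictG {V : Type} (G : SimpleGraph V) (U : Set V) : SimpleGraph V where
  Adj a b := G.Adj a b ∧ a ∈ U ∧ b ∈ U
  symm := ⟨fun a b ⟨h, ha, hb⟩ => ⟨h.symm, hb, ha⟩⟩
  loopless := ⟨fun a ⟨h, _, _⟩ => G.irrefl h⟩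

/-- `T` is a search tree on the induced subgraph `G[U]`: its nodes are the vertices of `U`,
the subtree of every node induces a connected subgraph, and every edge of `G[U]` joins
two comparable nodes of `T`. -/
def IsSTGOn {V : Type} (G : SimpleGraph V) (U : Finset V) (T : RTree V) : Prop :=
  T.supp = U ∧
  (∀ v ∈ U, ((restrictG G ↑U).induce (T.descSet v)).Connected) ∧
  (∀ u v : V, u ∈ U → v ∈ U → G.Adj u v → T.Anc u v ∨ T.Anc v u)

/-- `T` is a search tree on the graph `G`. -/
def IsSTG {V : Type} [Fintype V] (G : SimpleGraph V) (T : RTree V) : Prop :=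
  IsSTGOn G Finset.univ T

/-- `T'` is obtained from `T` by rotating the edge `(p, c)` of `T`, where `p` is
the parent of `c`: `c` replaces `p` (becoming a child of `p`'s former parent, or the
root if `p` was the root), `p` becomes a child of `c`, `p` keeps its other children,
and each child `x` of `c` whose subtree contains a vertex of `G` adjacent to `p`
becomes a child of `p` (the other children of `c` stay children of `c`). -/
def IsRotationAt {V : Type} (G : SimpleGraph V) (T T' : RTree V) (p c : V) : Prop :=
  T.parent c = some p ∧
  T'.supp = T.supp ∧
  T'.parent c = T.parent p ∧
  T'.parent p = some c ∧
  (∀ x : V, x ≠ p → T.parent x = some c →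
    ((∃ u ∈ T.descSet x, G.Adj u p) → T'.parent x = some p) ∧
    (¬(∃ u ∈ T.descSet x, G.Adj u p) → T'.parent x = some c)) ∧
  (∀ x : V, x ≠ c → x ≠ p → T.parent x ≠ some c → T'.parent x = T.parent x)

/-- `T'` is obtained from `T` by a single rotation. -/
def IsRotation {V : Type} (G : SimpleGraph V) (T T' : RTree V) : Prop :=
  ∃ p c, IsRotationAt G T T' p c

/-- `T2` can be obtained from `T1` by exactly `k` rotations. -/
def ReachesIn {V : Type} (G : SimpleGraph V) : ℕ → RTree V → RTree V → Prop
  | 0, T1, T2 => T1 = T2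
  | k+1, T1, T2 => ∃ T', IsRotation G T1 T' ∧ ReachesIn G k T' T2

/-- Vertex type of the caterpillar `C(m_1, …, m_n)`: spine vertices `inl i` and
leg vertices `inr ⟨i, j⟩`. -/
abbrev CatV (n : ℕ) (m : Fin n → ℕ) : Type := Fin n ⊕ (Σ i : Fin n, Fin (m i))

/-- The caterpillar tree `C(m_1, …, m_n)`: the spine `s_1 - s_2 - ⋯ - s_n` is a path,
and leg `ℓ_{i,j}` is adjacent to `s_i`. -/
def caterpillar (n : ℕ) (m : Fin n → ℕ) : SimpleGraph (CatV n m) where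
  Adj x y :=
    match x, y with
    | Sum.inl i, Sum.inl j => i.val + 1 = j.val ∨ j.val + 1 = i.val
    | Sum.inl i, Sum.inr l => l.1 = i
    | Sum.inr l, Sum.inl i => l.1 = i
    | Sum.inr _, Sum.inr _ => False
  symm := ⟨by rintro (i | l) (j | l') h <;> simp_all <;> tauto⟩
  loopless := ⟨by rintro (i | l) h <;> simp_all⟩

/-- The (base 2) Shannon entropy `H(m_1, …, m_n) = ∑_{i : m_i > 0} (m_i/m) log (m/m_i)`. -/
noncomputable def shannonH {n : ℕ} (m : Fin n → ℕ) : ℝ :=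
  ∑ i, if 0 < m i then
    ((m i : ℝ) / (∑ j, (m j : ℝ))) * Real.logb 2 ((∑ j, (m j : ℝ)) / (m i : ℝ))
  else 0

/-- The parent function of the search tree `A(S, π)` on the caterpillar: the legs form a
path at the top of the tree, ordered bottom-to-top according to `π`, and the spine nodes
hang below, arranged according to the BST `S`. -/
def AParent {n : ℕ} {m : Fin n → ℕ} (S : RTree (Fin n))
    (π : Fin (∑ i, m i) ≃ (Σ i : Fin n, Fin (m i))) :
    CatV n m → Option (CatV n m) :=
  fun x => match x with
  | Sum.inl i =>
      match S.parent i with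
      | some j => some (Sum.inl j)
      | none => if h : 0 < ∑ i, m i then some (Sum.inr (π ⟨0, h⟩)) else none
  | Sum.inr l =>
      if h : (π.symm l).val + 1 < ∑ i, m i then
        some (Sum.inr (π ⟨(π.symm l).val + 1, h⟩))
      else none

/-- `T = A(S, π)`. -/
def IsA {n : ℕ} {m : Fin n → ℕ} (S : RTree (Fin n))
    (π : Fin (∑ i, m i) ≃ (Σ i : Fin n, Fin (m i))) (T : RTree (CatV n m)) : Prop :=
  T.supp = Finset.univ ∧ T.parent = AParent S π

/-- The parent function of the search tree `B(S)` on the caterpillar: every leg `ℓ_{i,j}`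
is a (childless) child of `s_i`, and the spine nodes are arranged according to `S`. -/
def BParent {n : ℕ} {m : Fin n → ℕ} (S : RTree (Fin n)) :
    CatV n m → Option (CatV n m) :=
  fun x => match x with
  | Sum.inl i => (S.parent i).map Sum.inl
  | Sum.inr l => some (Sum.inl l.1)

/-- `T = B(S)`. -/
def IsB {n : ℕ} {m : Fin n → ℕ} (S : RTree (Fin n)) (T : RTree (CatV n m)) : Prop :=
  T.supp = Finset.univ ∧ T.parent = BParent S

/-- `σ(π)`: the sequence of spine indices obtained from the leg ordering `π` by replacing
each leg `ℓ_{i,j}` with `i`. -/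
def sigmaOf {n : ℕ} {m : Fin n → ℕ}
    (π : Fin (∑ i, m i) ≃ (Σ i : Fin n, Fin (m i))) : List (Fin n) :=
  List.ofFn (fun j => (π j).1)

/-- Every leg node of `T` is bound, i.e. no leg node has a child. -/
def noFreeLegs {n : ℕ} {m : Fin n → ℕ} (T : RTree (CatV n m)) : Prop :=
  ∀ (x : CatV n m) (l : Σ i : Fin n, Fin (m i)), T.parent x ≠ some (Sum.inr l)

open Classical in
/-- The number of adjacent pairs in a list satisfying `P`. -/
noncomputable def pairAlt {α : Type} (P : α → α → Prop) : List α → ℕ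
  | [] => 0
  | [_] => 0
  | a :: b :: t => (if P a b then 1 else 0) + pairAlt P (b :: t)

open Classical in
/-- Wilber's quantity `λ(S, u, σ)`: 0 if `u` has at most one child; otherwise the number
of adjacent pairs in the restriction of `σ` to the subtree of `u` that do not both lie in
the subtree of one child of `u` and are not both equal to `u`. -/
noncomputable def wilberLam {n : ℕ} (S : RTree (Fin n)) (u : Fin n) (σ : List (Fin n)) : ℕ :=
  if (∃ v w : Fin n, v ≠ w ∧ S.parent v = some u ∧ S.parent w = some u) then
    pairAlt (fun x y =>
      ¬((x = u ∧ y = u) ∨ ∃ ch, S.parent ch = some u ∧ S.Anc ch x ∧ S.Anc ch y))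
      (σ.filter (fun x => decide (S.Anc u x)))
  else 0

/-- `λ'(S, u, σ) = λ(S, u, σ)` plus the number of occurrences of `u` in `σ`. -/
noncomputable def wilberLam' {n : ℕ} (S : RTree (Fin n)) (u : Fin n)
    (σ : List (Fin n)) : ℕ :=
  wilberLam S u σ + σ.count u

/-- Wilber's first lower bound `Λ'(S, σ) = ∑_u λ'(S, u, σ)`. -/
noncomputable def wilberL' {n : ℕ} (S : RTree (Fin n)) (σ : List (Fin n)) : ℕ :=
  ∑ u : Fin n, wilberLam' S u σ

/-- `P` is the projection `T[U]` of `T` onto `U`: its nodes are the nodes of `T` in `U`,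
and the parent of `u` in `P` is the nearest strict ancestor of `u` in `T` that lies
in `U` (which is exactly the result of pruning the vertices outside `U` one by one). -/
def IsProjOn {V : Type} [DecidableEq V] (T : RTree V) (U : Finset V) (P : RTree V) : Prop :=
  P.supp = T.supp ∩ U ∧
  ∀ u w : V, P.parent u = some w ↔
    (u ∈ U ∧ w ∈ U ∧ T.StrictAnc w u ∧ ∀ z ∈ U, T.StrictAnc z u → T.Anc z w)

/-- `P` is obtained from `T` by pruning the vertex `v`. -/
def IsPruneOf {V : Type} [DecidableEq V] (T : RTree V) (v : V) (P : RTree V) : Prop :=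
  IsProjOn T (T.supp.erase v) P

/-- `PruneSeq T l P`: `P` is obtained from `T` by successively pruning the
vertices in the list `l`, in order. -/
def PruneSeq {V : Type} [DecidableEq V] : RTree V → List V → RTree V → Prop
  | T, [], P => P = T
  | T, v :: rest, P => ∃ P', IsPruneOf T v P' ∧ PruneSeq P' rest P

/-- The number of alternations (edges whose endpoints get different colors under `f`)
on the path from the root to `z`. -/
noncomputable def altAt {V K : Type} (f : V → K) (T : RTree V) (z : V) : ℕ :=
  Set.ncard {x | T.Anc x z ∧ ∃ y, T.parent x = some y ∧ f x ≠ f y}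

/-- The alternation number of `T` w.r.t. the coloring `f`: the maximum number of
alternations on a root-to-node path. -/
noncomputable def altNum {V K : Type} (f : V → K) (T : RTree V) : ℕ :=
  T.supp.sup (fun z => altAt f T z)

/-!
Rotating the edge above a vertex `r` shortens its path to the root and keeps the tree a
search tree, so `T₁` can be brought to the root `r` of `T₂`. Once the roots agree, the
subtrees hanging from `r` in either tree are the connected components of `G[U] - r`, so they
pair up with equal vertex sets. Each such branch is a search tree on fewer vertices, hence by
induction can be rotated into the corresponding branch of `T₂`; rotations inside a branch are
rotations of the whole tree that leave the rest of it untouched. Fixing one branch at a time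
strictly decreases the number of nodes whose parent differs from that in `T₂`.
-/

namespace RTree

variable {V : Type} {T : RTree V}

protected lemma ext {T₁ T₂ : RTree V} (hsupp : T₁.supp = T₂.supp)
    (hparent : T₁.parent = T₂.parent) : T₁ = T₂ := by
  cases T₁; cases T₂; simp_all

lemma eq_of_supp_eq_empty {T₁ T₂ : RTree V} (h₁ : T₁.supp = ∅) (h₂ : T₂.supp = ∅) :
    T₁ = T₂ :=
  RTree.ext (h₁.trans h₂.symm) <| funext fun v => by
    rw [T₁.parent_eq_none v (by simp [h₁]), T₂.parent_eq_none v (by simp [h₂])]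

lemma anc_refl (a : V) : T.Anc a a := Relation.ReflTransGen.refl

lemma anc_of_parent {v a : V} (h : T.parent v = some a) : T.Anc a v :=
  Relation.ReflTransGen.single h

lemma Anc.trans {a b v : V} (hab : T.Anc a b) (hbv : T.Anc b v) : T.Anc a v :=
  Relation.ReflTransGen.trans hbv hab

lemma Anc.head {a w v : V} (hv : T.parent v = some w) (hw : T.Anc a w) : T.Anc a v :=
  Relation.ReflTransGen.head hv hw

@[elab_as_elim]
lemma Anc.head_induction_on {a : V} {motive : ∀ v, T.Anc a v → Prop} {v : V}
    (h : T.Anc a v) (refl : motive a (anc_refl a))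
    (head : ∀ {u w} (hu : T.parent u = some w) (hw : T.Anc a w), motive w hw →
      motive u (hw.head hu)) : motive v h :=
  Relation.ReflTransGen.head_induction_on (motive := fun v h => motive v h) h refl
    (fun hu hw ih => head hu hw ih)

lemma Anc.eq_or_parent {a v : V} (h : T.Anc a v) :
    a = v ∨ ∃ w, T.parent v = some w ∧ T.Anc a w := by
  rcases Relation.ReflTransGen.cases_head h with rfl | h
  · exact Or.inl rfl
  · exact Or.inr h

lemma Anc.eq_or_child {a v : V} (h : T.Anc a v) :
    a = v ∨ ∃ y, T.parent y = some a ∧ T.Anc y v := by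
  rcases Relation.ReflTransGen.cases_tail h with rfl | ⟨y, hy, hya⟩
  · exact Or.inl rfl
  · exact Or.inr ⟨y, hya, hy⟩

lemma Anc.anc_parent_of_ne {a v w : V} (h : T.Anc a v) (hne : a ≠ v)
    (hv : T.parent v = some w) : T.Anc a w := by
  rcases h.eq_or_parent with h | ⟨w', hw', haw'⟩
  · exact absurd h hne
  · rwa [Option.some.inj (hw'.symm.trans hv)] at haw'

lemma Anc.eq_of_parent_eq_none {a v : V} (hv : T.parent v = none) (h : T.Anc a v) :
    a = v := by
  rcases h.eq_or_parent with h | ⟨w, hw, -⟩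
  · exact h
  · simp [hv] at hw

lemma Anc.mem_supp {a v : V} (h : T.Anc a v) (ha : a ∈ T.supp) : v ∈ T.supp := by
  rcases h.eq_or_parent with rfl | ⟨w, hw, -⟩
  · exact ha
  · exact (T.mem_of_parent hw).1

lemma Anc.mem_supp_of_mem {a v : V} (h : T.Anc a v) (hv : v ∈ T.supp) : a ∈ T.supp := by
  induction h using Anc.head_induction_on with
  | refl => exact hv
  | head hu _ ih => exact ih (T.mem_of_parent hu).2

lemma anc_total {a b v : V} (ha : T.Anc a v) (hb : T.Anc b v) : T.Anc a b ∨ T.Anc b a := by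
  induction ha using Anc.head_induction_on with
  | refl => exact Or.inr hb
  | @head u w hu hw ih =>
    rcases hb.eq_or_parent with rfl | ⟨w', hw', hbw'⟩
    · exact Or.inl (hw.head hu)
    · obtain rfl : w' = w := Option.some.inj (hw'.symm.trans hu)
      exact ih hbw'

lemma anc_of_parent_eq_none {r v : V} (hr : r ∈ T.supp) (hrn : T.parent r = none)
    (hv : v ∈ T.supp) : T.Anc r v := by
  obtain ⟨r', hr', hr'n, hvr'⟩ := T.reaches_root v hv
  exact T.root_unique r' hr' r hr hr'n hrn ▸ hvr'

lemma finite_setOf_anc (T : RTree V) (v : V) : {a | T.Anc a v}.Finite :=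
  (T.supp.finite_toSet.insert v).subset fun a ha => by
    rcases Anc.eq_or_child ha with rfl | ⟨y, hy, -⟩
    · exact Set.mem_insert a _
    · exact Set.mem_insert_of_mem v (T.mem_of_parent hy).2

lemma anc_antisymm {a b : V} (hab : T.Anc a b) (hba : T.Anc b a) : a = b := by
  by_cases hb : b ∈ T.supp
  · obtain ⟨r, hr, hrn, hbr⟩ := T.reaches_root b hb
    have key : ∀ x, T.Anc r x → ∀ y, T.Anc y x → T.Anc x y → y = x := by
      intro x hx
      induction hx using Anc.head_induction_on with
      | refl => exact fun y hy _ => hy.eq_of_parent_eq_none hrn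
      | @head u w hu hw ih =>
        intro y hyu huy
        rcases hyu.eq_or_parent with rfl | ⟨w', hw', hyw⟩
        · rfl
        · rw [Option.some.inj (hw'.symm.trans hu)] at hyw
          have hyw' : y = w := ih y hyw ((anc_of_parent hu).trans huy)
          subst hyw'
          exact (ih u huy (anc_of_parent hu)).symm
    exact key b hbr a hab hba
  · rcases hab.eq_or_parent with h | ⟨w, hw, -⟩
    · exact h
    · exact absurd (T.mem_of_parent hw).1 hb

lemma parent_ne_self (a : V) : T.parent a ≠ some a := by
  intro h
  obtain ⟨r, -, hrn, har⟩ := T.reaches_root a (T.mem_of_parent h).1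
  induction har using Relation.ReflTransGen.head_induction_on with
  | refl => simp [hrn] at h
  | @head x y hxy _ ih =>
    obtain rfl : x = y := Option.some.inj (h.symm.trans hxy)
    exact ih h

lemma ne_of_parent_eq_some {v a : V} (h : T.parent v = some a) : v ≠ a := fun e =>
  T.parent_ne_self v (e ▸ h)

lemma not_anc_of_parent {v a : V} (h : T.parent v = some a) : ¬ T.Anc v a := fun hva =>
  T.parent_ne_self v (anc_antisymm hva (anc_of_parent h) ▸ h)

lemma connected_induce_descSet {H : SimpleGraph V} {v : V}
    (h : ∀ y, T.parent y = some v →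
      (H.induce (T.descSet y)).Connected ∧ ∃ w ∈ T.descSet y, H.Adj w v) :
    (H.induce (T.descSet v)).Connected := by
  refine H.induce_connected_of_patches v (anc_refl v) fun {z} hz => ?_
  rcases hz.eq_or_child with rfl | ⟨y, hy, hyz⟩
  · exact ⟨{v}, Set.singleton_subset_iff.2 (anc_refl v), rfl, rfl, SimpleGraph.Reachable.refl _⟩
  obtain ⟨hconn, w, hw, hwv⟩ := h y hy
  have hsub : T.descSet y ⊆ T.descSet v := fun u hu => (anc_of_parent hy).trans hu
  refine ⟨T.descSet y ∪ {w, v}, Set.union_subset hsub ?_, Or.inr (by simp), Or.inl hyz, ?_⟩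
  · simpa [Set.insert_subset_iff] using ⟨hsub hw, anc_refl v⟩
  · exact (SimpleGraph.induce_union_connected hconn.preconnected
      (SimpleGraph.induce_pair_connected_of_adj hwv).preconnected ⟨w, hw, by simp⟩).preconnected _ _

end RTree

lemma SimpleGraph.Connected.exists_adj_mem_not_mem {V : Type} {H : SimpleGraph V}
    {D S : Set V} (hD : (H.induce D).Connected) {a b : V} (ha : a ∈ D) (hb : b ∈ D)
    (haS : a ∈ S) (hbS : b ∉ S) : ∃ x ∈ D, ∃ y ∈ D, H.Adj x y ∧ x ∈ S ∧ y ∉ S := by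
  obtain ⟨w⟩ := hD.preconnected ⟨a, ha⟩ ⟨b, hb⟩
  obtain ⟨d, -, hdS, hdS'⟩ := w.exists_boundary_dart {x | x.1 ∈ S} haS hbS
  exact ⟨d.fst.1, d.fst.2, d.snd.1, d.snd.2, d.adj, hdS, hdS'⟩

section SearchTree

open RTree

variable {V : Type} {G : SimpleGraph V} {U : Finset V} {T : RTree V}

lemma IsSTGOn.mem_of_anc (h : IsSTGOn G U T) {a v : V} (hav : T.Anc a v) (ha : a ∈ U) :
    v ∈ U :=
  h.1 ▸ hav.mem_supp (h.1 ▸ ha)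

lemma IsSTGOn.anc_or_anc_of_adj (h : IsSTGOn G U T) {y a b : V} (hya : T.Anc y a)
    (ha : a ∈ U) (hb : b ∈ U) (hab : G.Adj a b) : T.Anc y b ∨ T.Anc b y := by
  rcases h.2.2 a b ha hb hab with hab' | hba
  · exact Or.inl (hya.trans hab')
  · exact anc_total hya hba

lemma IsSTGOn.exists_adj_of_parent (h : IsSTGOn G U T) {y w : V}
    (hy : T.parent y = some w) : ∃ x ∈ T.descSet y, G.Adj x w := by
  have hwU : w ∈ U := h.1 ▸ (T.mem_of_parent hy).2
  obtain ⟨x, -, z, hz, ⟨hxz, hxU, hzU⟩, hx, hzy⟩ :=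
    (h.2.1 w hwU).exists_adj_mem_not_mem (S := T.descSet y) (anc_of_parent hy) (anc_refl w)
      (anc_refl y) (not_anc_of_parent hy)
  refine ⟨x, hx, ?_⟩
  rcases h.anc_or_anc_of_adj hx hxU hzU hxz with hyz | hzy'
  · exact absurd hyz hzy
  · rcases hzy'.eq_or_parent with rfl | ⟨w', hw', hzw'⟩
    · exact absurd (anc_refl z) hzy
    · rw [Option.some.inj (hw'.symm.trans hy)] at hzw'
      rwa [anc_antisymm hzw' hz] at hxz

/-- The branches at a common root are the components of `G[U]` minus the root. -/
lemma IsSTGOn.descSet_subset_of_parent_eq_root {T' : RTree V} (h : IsSTGOn G U T)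
    (h' : IsSTGOn G U T') {r c c' v : V} (hr' : T'.parent r = none)
    (hc : T.parent c = some r) (hc' : T'.parent c' = some r) (hv : v ∈ T.descSet c)
    (hv' : v ∈ T'.descSet c') : T.descSet c ⊆ T'.descSet c' := by
  intro u hu
  by_contra hu'
  have hcU : c ∈ U := h.1 ▸ (T.mem_of_parent hc).1
  obtain ⟨x, -, y, hy, ⟨hxy, hxU, hyU⟩, hx, hy'⟩ :=
    (h.2.1 c hcU).exists_adj_mem_not_mem hv hu hv' hu'
  rcases h'.anc_or_anc_of_adj hx hxU hyU hxy with hc'y | hyc'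
  · exact hy' hc'y
  · rcases hyc'.eq_or_parent with rfl | ⟨w, hw, hyw⟩
    · exact hy' (anc_refl y)
    · rw [Option.some.inj (hw.symm.trans hc')] at hyw
      rw [hyw.eq_of_parent_eq_none hr'] at hy
      exact not_anc_of_parent hc hy

lemma IsSTGOn.descSet_eq_of_parent_eq_root {T' : RTree V} (h : IsSTGOn G U T)
    (h' : IsSTGOn G U T') {r c c' v : V} (hr : T.parent r = none) (hr' : T'.parent r = none)
    (hc : T.parent c = some r) (hc' : T'.parent c' = some r) (hv : v ∈ T.descSet c)
    (hv' : v ∈ T'.descSet c') : T.descSet c = T'.descSet c' :=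
  (h.descSet_subset_of_parent_eq_root h' hr' hc hc' hv hv').antisymm
    (h'.descSet_subset_of_parent_eq_root h hr hc' hc hv' hv)

end SearchTree

namespace RTree

variable {V : Type} {G : SimpleGraph V} {T : RTree V} {p c : V}

lemma Anc.reflTransGen_of_parent_eq {f : V → Option V} {a u : V} (h : T.Anc a u)
    (hf : ∀ w, T.Anc w u → T.Anc a w → w ≠ a → f w = T.parent w) :
    Relation.ReflTransGen (fun x y => f x = some y) u a := by
  revert hf
  induction h using Anc.head_induction_on with
  | refl => exact fun _ => Relation.ReflTransGen.refl
  | @head u w hu hw ih =>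
    intro hf
    by_cases hua : u = a
    · subst hua; exact Relation.ReflTransGen.refl
    refine Relation.ReflTransGen.head ?_
      (ih fun x hxw hax hxa => hf x (hxw.trans (anc_of_parent hu)) hax hxa)
    rw [hf u (anc_refl u) (hw.head hu) hua]
    exact hu

open Classical in
noncomputable def rotateParent (G : SimpleGraph V) (T : RTree V) (p c : V) : V → Option V :=
  fun v =>
    if v = c then T.parent p
    else if v = p then some c
    else if T.parent v = some c then
      if ∃ u ∈ T.descSet v, G.Adj u p then some p else some c
    else T.parent v

lemma rotateParent_eq_some {x y : V} (h : rotateParent G T p c x = some y) :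
    (x = c ∧ T.parent p = some y) ∨ (x = p ∧ y = c) ∨
    (T.parent x = some c ∧ (∃ u ∈ T.descSet x, G.Adj u p) ∧ y = p) ∨
    (T.parent x = some c ∧ y = c) ∨ T.parent x = some y := by
  unfold rotateParent at h
  split_ifs at h with h1 h2 h3 h4
  · exact Or.inl ⟨h1, h⟩
  · exact Or.inr (Or.inl ⟨h2, (Option.some.inj h).symm⟩)
  · exact Or.inr (Or.inr (Or.inl ⟨h3, h4, (Option.some.inj h).symm⟩))
  · exact Or.inr (Or.inr (Or.inr (Or.inl ⟨h3, (Option.some.inj h).symm⟩)))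
  · exact Or.inr (Or.inr (Or.inr (Or.inr h)))

lemma rotateParent_eq_none {x : V} (h : rotateParent G T p c x = none) :
    (x = c ∧ T.parent p = none) ∨ (x ≠ p ∧ T.parent x = none) := by
  unfold rotateParent at h
  split_ifs at h with h1 h2
  · exact Or.inl ⟨h1, h⟩
  · exact Or.inr ⟨h2, h⟩

lemma rotateParent_child : rotateParent G T p c c = T.parent p := by
  simp [rotateParent]

lemma rotateParent_of_ne {x : V} (hxc : x ≠ c) (hxp : x ≠ p) (hx : T.parent x ≠ some c) :
    rotateParent G T p c x = T.parent x := by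
  simp [rotateParent, hxc, hxp, hx]

section Rotate

variable (hpc : T.parent c = some p)
include hpc

lemma rotateParent_parent : rotateParent G T p c p = some c := by
  simp [rotateParent, (ne_of_parent_eq_some hpc).symm]

lemma ne_parent_of_parent_eq_child {x : V} (hx : T.parent x = some c) : x ≠ p := by
  rintro rfl
  exact ne_of_parent_eq_some hpc (anc_antisymm (anc_of_parent hx) (anc_of_parent hpc))

lemma rotateParent_of_adj {x : V} (hx : T.parent x = some c)
    (hadj : ∃ u ∈ T.descSet x, G.Adj u p) : rotateParent G T p c x = some p := by
  simp [rotateParent, ne_of_parent_eq_some hx, ne_parent_of_parent_eq_child hpc hx, hx, hadj]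

lemma rotateParent_of_not_adj {x : V} (hx : T.parent x = some c)
    (hadj : ¬ ∃ u ∈ T.descSet x, G.Adj u p) : rotateParent G T p c x = some c := by
  simp only [rotateParent, ne_of_parent_eq_some hx, ne_parent_of_parent_eq_child hpc hx, hx,
    if_false, if_true, if_neg hadj]

lemma reflTransGen_rotateParent_of_not_anc {a u : V} (hu : ¬ T.Anc p u) (h : T.Anc a u) :
    Relation.ReflTransGen (fun x y => rotateParent G T p c x = some y) u a :=
  h.reflTransGen_of_parent_eq fun _ hwu _ _ =>
    rotateParent_of_ne (fun e => hu ((anc_of_parent hpc).trans (e ▸ hwu)))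
      (fun e => hu (e ▸ hwu))
      (fun e => hu (((anc_of_parent hpc).trans (anc_of_parent e)).trans hwu))

lemma reflTransGen_rotateParent_of_not_anc_child {a u : V} (ha : ¬ T.Anc a c)
    (h : T.Anc a u) :
    Relation.ReflTransGen (fun x y => rotateParent G T p c x = some y) u a := by
  refine h.reflTransGen_of_parent_eq fun w _ haw hwa => rotateParent_of_ne
    (fun e => ha (e ▸ haw)) (fun e => ha ((e ▸ haw).trans (anc_of_parent hpc))) fun e => ?_
  rcases haw.eq_or_parent with rfl | ⟨w', hw', haw'⟩
  · exact hwa rfl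
  · exact ha (Option.some.inj (hw'.symm.trans e) ▸ haw')

lemma reflTransGen_rotateParent_child {u : V} (h : T.Anc p u) :
    Relation.ReflTransGen (fun x y => rotateParent G T p c x = some y) u c := by
  have hpc' : rotateParent G T p c p = some c := rotateParent_parent hpc
  induction h using Anc.head_induction_on with
  | refl => exact Relation.ReflTransGen.single hpc'
  | @head u w hu _ ih =>
    by_cases huc : u = c
    · subst huc; exact Relation.ReflTransGen.refl
    by_cases hup : u = p
    · subst hup; exact Relation.ReflTransGen.single hpc'
    by_cases hchild : T.parent u = some c
    · by_cases hadj : ∃ x ∈ T.descSet u, G.Adj x p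
      · exact Relation.ReflTransGen.head (rotateParent_of_adj hpc hchild hadj)
          (Relation.ReflTransGen.single hpc')
      · exact Relation.ReflTransGen.single (rotateParent_of_not_adj hpc hchild hadj)
    · refine Relation.ReflTransGen.head ?_ ih
      rw [rotateParent_of_ne huc hup hchild]
      exact hu

lemma rotateParent_reaches_root {v : V} (hv : v ∈ T.supp) : ∃ r ∈ T.supp,
    rotateParent G T p c r = none ∧
    Relation.ReflTransGen (fun x y => rotateParent G T p c x = some y) v r := by
  have hpS := (T.mem_of_parent hpc).2
  cases hq : T.parent p with
  | none =>
    exact ⟨c, (T.mem_of_parent hpc).1, rotateParent_child.trans hq,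
      reflTransGen_rotateParent_child hpc (anc_of_parent_eq_none hpS hq hv)⟩
  | some q =>
    obtain ⟨r, hr, hrn, -⟩ := T.reaches_root v hv
    have hrp : r ≠ p := fun e => by simp [e, hq] at hrn
    have hrc : r ≠ c := fun e => by simp [e, hpc] at hrn
    refine ⟨r, hr, by rw [rotateParent_of_ne hrc hrp (by simp [hrn]), hrn], ?_⟩
    by_cases hpv : T.Anc p v
    · have hqp : ¬ T.Anc p q := not_anc_of_parent hq
      have hqS := (T.mem_of_parent hq).2
      exact (reflTransGen_rotateParent_child hpc hpv).trans
        (Relation.ReflTransGen.head (rotateParent_child.trans hq)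
          (reflTransGen_rotateParent_of_not_anc hpc hqp (anc_of_parent_eq_none hr hrn hqS)))
    · exact reflTransGen_rotateParent_of_not_anc hpc hpv (anc_of_parent_eq_none hr hrn hv)

end Rotate

noncomputable def rotate (G : SimpleGraph V) (T : RTree V) {p c : V}
    (hpc : T.parent c = some p) : RTree V where
  supp := T.supp
  parent := rotateParent G T p c
  parent_eq_none v hv := by
    rw [rotateParent_of_ne (fun e : v = c => hv (e ▸ (T.mem_of_parent hpc).1))
      (fun e : v = p => hv (e ▸ (T.mem_of_parent hpc).2)) (by simp [T.parent_eq_none v hv]),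
      T.parent_eq_none v hv]
  mem_of_parent h := by
    rcases rotateParent_eq_some h with ⟨rfl, hq⟩ | ⟨rfl, rfl⟩ | ⟨hch, -, rfl⟩ | ⟨hch, rfl⟩ |
        hx
    · exact ⟨(T.mem_of_parent hpc).1, (T.mem_of_parent hq).2⟩
    · exact (T.mem_of_parent hpc).symm
    · exact ⟨(T.mem_of_parent hch).1, (T.mem_of_parent hpc).2⟩
    · exact T.mem_of_parent hch
    · exact T.mem_of_parent hx
  root_unique v hv w hw hvn hwn := by
    have hpS := (T.mem_of_parent hpc).2
    rcases rotateParent_eq_none hvn with ⟨rfl, hv'⟩ | ⟨hvp, hv'⟩ <;>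
      rcases rotateParent_eq_none hwn with ⟨rfl, hw'⟩ | ⟨hwp, hw'⟩
    · rfl
    · exact absurd (T.root_unique p hpS w hw hv' hw') (Ne.symm hwp)
    · exact absurd (T.root_unique p hpS v hv hw' hv') (Ne.symm hvp)
    · exact T.root_unique v hv w hw hv' hw'
  reaches_root _ hv := rotateParent_reaches_root hpc hv

end RTree

lemma IsRotationAt.eq_rotate {V : Type} {G : SimpleGraph V} {T T' : RTree V} {p c : V}
    (h : IsRotationAt G T T' p c) : T' = T.rotate G h.1 := by
  obtain ⟨hpc, hsupp, hc, hp, hchild, hother⟩ := h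
  refine RTree.ext hsupp (funext fun x => ?_)
  show T'.parent x = RTree.rotateParent G T p c x
  by_cases hxc : x = c
  · rw [hxc, hc, RTree.rotateParent_child]
  by_cases hxp : x = p
  · rw [hxp, hp, RTree.rotateParent_parent hpc]
  by_cases hx : T.parent x = some c
  · by_cases hadj : ∃ u ∈ T.descSet x, G.Adj u p
    · rw [(hchild x hxp hx).1 hadj, RTree.rotateParent_of_adj hpc hx hadj]
    · rw [(hchild x hxp hx).2 hadj, RTree.rotateParent_of_not_adj hpc hx hadj]
  · rw [hother x hxc hxp hx, RTree.rotateParent_of_ne hxc hxp hx]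

namespace RTree

variable {V : Type} {G : SimpleGraph V} {T : RTree V} {p c : V}
  (hpc : T.parent c = some p)
include hpc

lemma rotate_isRotationAt : IsRotationAt G T (T.rotate G hpc) p c :=
  ⟨hpc, rfl, rotateParent_child, rotateParent_parent hpc,
    fun _ _ hx => ⟨rotateParent_of_adj hpc hx, rotateParent_of_not_adj hpc hx⟩,
    fun _ hxc hxp hx => rotateParent_of_ne hxc hxp hx⟩

lemma anc_of_anc_rotate {v u : V} (hv : v ≠ c) (h : (T.rotate G hpc).Anc v u) :
    T.Anc v u := by
  induction h using Anc.head_induction_on with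
  | refl => exact anc_refl v
  | @head x y hxy _ ih =>
    rcases rotateParent_eq_some hxy with ⟨rfl, hq⟩ | ⟨rfl, rfl⟩ | ⟨hx, -, rfl⟩ | ⟨hx, rfl⟩ | hx
    · exact (ih.head hq).head hpc
    · exact ih.anc_parent_of_ne hv hpc
    · exact (ih.head hpc).head hx
    · exact ih.head hx
    · exact ih.head hx

lemma anc_rotate_child_iff {u : V} : (T.rotate G hpc).Anc c u ↔ T.Anc p u := by
  refine ⟨fun h => ?_, reflTransGen_rotateParent_child hpc⟩
  induction h using Anc.head_induction_on with
  | refl => exact anc_of_parent hpc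
  | @head x y hxy _ ih =>
    rcases rotateParent_eq_some hxy with ⟨rfl, -⟩ | ⟨rfl, -⟩ | ⟨hx, -, rfl⟩ | ⟨hx, rfl⟩ | hx
    · exact anc_of_parent hpc
    · exact anc_refl x
    · exact ((anc_refl y).head hpc).head hx
    · exact ih.head hx
    · exact ih.head hx

lemma descSet_rotate_child : (T.rotate G hpc).descSet c = T.descSet p :=
  Set.ext fun _ => anc_rotate_child_iff hpc

lemma descSet_rotate_of_ne {v : V} (hvc : v ≠ c) (hvp : v ≠ p) :
    (T.rotate G hpc).descSet v = T.descSet v := by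
  refine Set.ext fun u => ⟨anc_of_anc_rotate hpc hvc, fun h => ?_⟩
  by_cases hvc' : T.Anc v c
  swap
  · exact reflTransGen_rotateParent_of_not_anc_child hpc hvc' h
  obtain ⟨q, hq, hvq⟩ := (hvc'.anc_parent_of_ne hvc hpc).eq_or_parent.resolve_left hvp
  have hqp : ¬ T.Anc p q := not_anc_of_parent hq
  by_cases hpu : T.Anc p u
  · exact (reflTransGen_rotateParent_child hpc hpu).trans
      (Relation.ReflTransGen.head (rotateParent_child.trans hq)
        (reflTransGen_rotateParent_of_not_anc hpc hqp hvq))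
  · exact reflTransGen_rotateParent_of_not_anc hpc hpu h

lemma setOf_anc_rotate_ssubset : {a | (T.rotate G hpc).Anc a c} ⊂ {a | T.Anc a c} := by
  refine ⟨fun a ha => ?_, fun hsub => ?_⟩
  · by_cases hac : a = c
    · exact hac ▸ anc_refl a
    · exact anc_of_anc_rotate hpc hac ha
  · have hcp : (T.rotate G hpc).Anc c p := anc_of_parent (rotateParent_parent hpc)
    exact ne_of_parent_eq_some hpc (anc_antisymm hcp (hsub (anc_of_parent hpc)))

lemma anc_rotate_parent_of_adj {a : V} (hpa : T.Anc p a) (hac : a ≠ c) (hap : G.Adj a p) :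
    (T.rotate G hpc).Anc p a := by
  obtain ⟨y, hy, hya⟩ := hpa.eq_or_child.resolve_left (G.ne_of_adj hap).symm
  obtain ⟨x, hx, hxc, hxp, hxa⟩ : ∃ x, rotateParent G T p c x = some p ∧ x ≠ c ∧ x ≠ p ∧
      T.Anc x a := by
    by_cases hyc : y = c
    · rw [hyc] at hya
      obtain ⟨x, hx, hxa⟩ := hya.eq_or_child.resolve_left (Ne.symm hac)
      exact ⟨x, rotateParent_of_adj hpc hx ⟨a, hxa, hap⟩, ne_of_parent_eq_some hx,
        ne_parent_of_parent_eq_child hpc hx, hxa⟩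
    · refine ⟨y, ?_, hyc, ne_of_parent_eq_some hy, hya⟩
      rw [rotateParent_of_ne hyc (ne_of_parent_eq_some hy)
        fun e => ne_of_parent_eq_some hpc (Option.some.inj (hy.symm.trans e)).symm]
      exact hy
  have hxa' : a ∈ (T.rotate G hpc).descSet x := by
    rw [descSet_rotate_of_ne hpc hxc hxp]; exact hxa
  exact (anc_of_parent hx).trans hxa'

end RTree

section RotateSearchTree

open RTree

variable {V : Type} {G : SimpleGraph V} {U : Finset V} {T : RTree V} {p c : V}
  (hpc : T.parent c = some p)
include hpc

lemma IsSTGOn.connected_descSet_rotate_parent (h : IsSTGOn G U T) :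
    ((restrictG G U).induce ((T.rotate G hpc).descSet p)).Connected := by
  refine connected_induce_descSet fun y hy => ?_
  have hyU : y ∈ U := h.1 ▸ ((T.rotate G hpc).mem_of_parent hy).1
  have hpU : p ∈ U := h.1 ▸ ((T.rotate G hpc).mem_of_parent hy).2
  have hyc : y ≠ c := fun e => T.parent_ne_self p (rotateParent_child.symm.trans (e ▸ hy))
  have hyp : y ≠ p := ne_of_parent_eq_some hy
  rw [descSet_rotate_of_ne hpc hyc hyp]
  refine ⟨h.2.1 y hyU, ?_⟩
  obtain ⟨w, hw, hwp⟩ : ∃ w ∈ T.descSet y, G.Adj w p := by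
    rcases rotateParent_eq_some hy with ⟨e, -⟩ | ⟨e, -⟩ | ⟨-, hadj, -⟩ | ⟨-, e⟩ | hy'
    · exact absurd e hyc
    · exact absurd e hyp
    · exact hadj
    · exact absurd e.symm (ne_of_parent_eq_some hpc)
    · exact h.exists_adj_of_parent hy'
  exact ⟨w, hw, hwp, h.mem_of_anc hw hyU, hpU⟩

lemma IsSTGOn.rotate (h : IsSTGOn G U T) : IsSTGOn G U (T.rotate G hpc) := by
  refine ⟨h.1, fun v hv => ?_, ?_⟩
  · by_cases hvc : v = c
    · rw [hvc, descSet_rotate_child hpc]; exact h.2.1 p (h.1 ▸ (T.mem_of_parent hpc).2)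
    by_cases hvp : v = p
    · rw [hvp]; exact h.connected_descSet_rotate_parent hpc
    · rw [descSet_rotate_of_ne hpc hvc hvp]; exact h.2.1 v hv
  have key : ∀ a b, G.Adj a b → T.Anc b a →
      (T.rotate G hpc).Anc a b ∨ (T.rotate G hpc).Anc b a := by
    intro a b hab hba
    by_cases hbc : b = c
    · rw [hbc] at hba ⊢
      exact Or.inr ((anc_rotate_child_iff hpc).2 ((anc_of_parent hpc).trans hba))
    by_cases hbp : b = p
    · rw [hbp] at hab hba ⊢
      by_cases hac : a = c
      · exact Or.inl (by rw [hac]; exact anc_of_parent (rotateParent_parent hpc))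
      · exact Or.inr (anc_rotate_parent_of_adj hpc hba hac hab)
    · have hba' : a ∈ (T.rotate G hpc).descSet b := by
        rw [descSet_rotate_of_ne hpc hbc hbp]; exact hba
      exact Or.inr hba'
  intro a b ha hb hab
  rcases h.2.2 a b ha hb hab with hab' | hba
  · exact (key b a hab.symm hab').symm
  · exact key a b hab hba

end RotateSearchTree

section Reaches

open RTree

variable {V : Type} {G : SimpleGraph V} {U : Finset V}

lemma ReachesIn.trans {k l : ℕ} {T₁ T₂ T₃ : RTree V} (h₁ : ReachesIn G k T₁ T₂)
    (h₂ : ReachesIn G l T₂ T₃) : ReachesIn G (k + l) T₁ T₃ := by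
  induction k generalizing T₁ with
  | zero => cases h₁; simpa using h₂
  | succ k ih =>
    obtain ⟨T', hT', h₁⟩ := h₁
    rw [Nat.succ_add]
    exact ⟨T', hT', ih h₁⟩

lemma ReachesIn.isSTGOn {k : ℕ} {T T' : RTree V} (h : ReachesIn G k T T')
    (hT : IsSTGOn G U T) : IsSTGOn G U T' := by
  induction k generalizing T with
  | zero => cases h; exact hT
  | succ k ih =>
    obtain ⟨T'', ⟨p, c, hrot⟩, h⟩ := h
    rw [hrot.eq_rotate] at h
    exact ih h (hT.rotate hrot.1)

lemma IsSTGOn.exists_reachesIn_with_root {T : RTree V} (h : IsSTGOn G U T) (r : V) :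
    ∃ k T', ReachesIn G k T T' ∧ IsSTGOn G U T' ∧ T'.parent r = none := by
  induction hn : {a | T.Anc a r}.ncard using Nat.strong_induction_on generalizing T with
  | _ n ih =>
    cases hpr : T.parent r with
    | none => exact ⟨0, T, rfl, h, hpr⟩
    | some p =>
      have hlt := Set.ncard_lt_ncard (setOf_anc_rotate_ssubset (G := G) hpr)
        (T.finite_setOf_anc r)
      obtain ⟨k, T', hk, hT', hr⟩ := ih _ (hn ▸ hlt) (h.rotate hpr) rfl
      exact ⟨k + 1, T', ⟨_, ⟨p, r, rotate_isRotationAt hpr⟩, hk⟩, hT', hr⟩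

end Reaches

lemma induce_restrictG_of_subset {V : Type} (G : SimpleGraph V) {U D : Set V} (hD : D ⊆ U) :
    (restrictG G U).induce D = G.induce D := by
  ext x y
  exact and_iff_left ⟨hD x.2, hD y.2⟩

namespace RTree

variable {V : Type} {T : RTree V}

open Classical in
noncomputable def subtree (T : RTree V) (a : V) : RTree V where
  supp := T.supp.filter (T.Anc a)
  parent v := if T.Anc a v ∧ v ≠ a then T.parent v else none
  parent_eq_none v hv := by
    split_ifs with h
    · exact T.parent_eq_none v fun hv' => hv (Finset.mem_filter.2 ⟨hv', h.1⟩)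
    · rfl
  mem_of_parent {v w} h := by
    split_ifs at h with hv
    exact ⟨Finset.mem_filter.2 ⟨(T.mem_of_parent h).1, hv.1⟩,
      Finset.mem_filter.2 ⟨(T.mem_of_parent h).2, hv.1.anc_parent_of_ne hv.2.symm h⟩⟩
  root_unique v hv w hw hvn hwn := by
    have key : ∀ x ∈ T.supp.filter (T.Anc a),
        (if T.Anc a x ∧ x ≠ a then T.parent x else none) = none → x = a := by
      intro x hx hxn
      by_contra hxa
      obtain ⟨y, hy, -⟩ := ((Finset.mem_filter.1 hx).2.eq_or_parent).resolve_left (Ne.symm hxa)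
      simp [(Finset.mem_filter.1 hx).2, hxa, hy] at hxn
    rw [key v hv hvn, key w hw hwn]
  reaches_root v hv := by
    have hav := (Finset.mem_filter.1 hv).2
    refine ⟨a, Finset.mem_filter.2 ⟨hav.mem_supp_of_mem (Finset.mem_filter.1 hv).1,
      anc_refl a⟩, by simp, ?_⟩
    induction hav using Anc.head_induction_on with
    | refl => exact Relation.ReflTransGen.refl
    | @head u w hu hw ih =>
      by_cases hua : u = a
      · rw [hua]
      refine Relation.ReflTransGen.head ?_ (ih (Finset.mem_filter.2 ⟨(T.mem_of_parent hu).2, hw⟩))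
      simp [hw.head hu, hua, hu]

lemma mem_subtree_supp {a v : V} : v ∈ (T.subtree a).supp ↔ v ∈ T.supp ∧ T.Anc a v := by
  classical exact Finset.mem_filter

lemma subtree_parent_of_ne {a v : V} (hav : T.Anc a v) (hva : v ≠ a) :
    (T.subtree a).parent v = T.parent v :=
  if_pos ⟨hav, hva⟩

lemma subtree_parent_self (a : V) : (T.subtree a).parent a = none :=
  if_neg fun h => h.2 rfl

lemma anc_subtree_iff {a b v : V} (hab : T.Anc a b) : (T.subtree a).Anc b v ↔ T.Anc b v := by
  constructor
  · intro h
    induction h using Anc.head_induction_on with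
    | refl => exact anc_refl b
    | @head u w hu _ ih =>
      by_cases hua : T.Anc a u ∧ u ≠ a
      · exact ih.head ((subtree_parent_of_ne hua.1 hua.2).symm.trans hu)
      · simp [subtree, hua] at hu
  · intro h
    induction h using Anc.head_induction_on with
    | refl => exact anc_refl b
    | @head u w hu hw ih =>
      have hau : T.Anc a u := (hab.trans hw).head hu
      by_cases hua : u = a
      · exact absurd (hua ▸ hab.trans hw) (not_anc_of_parent hu)
      exact ih.head ((subtree_parent_of_ne hau hua).trans hu)

lemma descSet_subtree {a b : V} (hab : T.Anc a b) :
    (T.subtree a).descSet b = T.descSet b :=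
  Set.ext fun _ => anc_subtree_iff hab

end RTree

open RTree in
lemma IsSTGOn.subtree {V : Type} {G : SimpleGraph V} {U : Finset V} {T : RTree V}
    (h : IsSTGOn G U T) (a : V) : IsSTGOn G (T.subtree a).supp (T.subtree a) := by
  refine ⟨rfl, fun b hb => ?_, fun u v hu hv huv => ?_⟩
  · obtain ⟨hbT, hab⟩ := mem_subtree_supp.1 hb
    have hsub : T.descSet b ⊆ ↑(T.subtree a).supp := fun v hv =>
      mem_subtree_supp.2 ⟨hv.mem_supp hbT, hab.trans hv⟩
    rw [descSet_subtree hab, induce_restrictG_of_subset G hsub,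
      ← induce_restrictG_of_subset G (U := ↑U) (h.1 ▸ fun v hv => (mem_subtree_supp.1 (hsub hv)).1)]
    exact h.2.1 b (h.1 ▸ hbT)
  · obtain ⟨huT, hau⟩ := mem_subtree_supp.1 hu
    obtain ⟨hvT, hav⟩ := mem_subtree_supp.1 hv
    rcases h.2.2 u v (h.1 ▸ huT) (h.1 ▸ hvT) huv with huv' | hvu
    · exact Or.inl ((anc_subtree_iff hau).2 huv')
    · exact Or.inr ((anc_subtree_iff hav).2 hvu)

namespace RTree

variable {V : Type} {G : SimpleGraph V} {T S S' : RTree V} {r : V}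

/-- `T` agrees with `S` on the nodes of `S`, except that the root of `S` hangs from `r`,
and no other node of `T` hangs from a node of `S`. -/
structure IsBranch (T S : RTree V) (r : V) : Prop where
  not_mem : r ∉ S.supp
  parent_eq : ∀ v ∈ S.supp, T.parent v = some ((S.parent v).getD r)
  mem_of_parent : ∀ {v w}, T.parent v = some w → w ∈ S.supp → v ∈ S.supp

lemma isBranch_subtree {c : V} (hc : T.parent c = some r) : IsBranch T (T.subtree c) r where
  not_mem hr := not_anc_of_parent hc (mem_subtree_supp.1 hr).2
  parent_eq v hv := by
    by_cases hvc : v = c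
    · rw [hvc, subtree_parent_self, hc]; rfl
    · obtain ⟨w, hw, -⟩ := (mem_subtree_supp.1 hv).2.eq_or_parent.resolve_left (Ne.symm hvc)
      rw [subtree_parent_of_ne (mem_subtree_supp.1 hv).2 hvc, hw]; rfl
  mem_of_parent {v w} hv hw :=
    mem_subtree_supp.2 ⟨(T.mem_of_parent hv).1, (mem_subtree_supp.1 hw).2.head hv⟩

lemma IsBranch.parent_eq_some_iff (h : IsBranch T S r) {v w : V} (hv : v ∈ S.supp)
    (hw : w ∈ S.supp) : T.parent v = some w ↔ S.parent v = some w := by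
  rw [h.parent_eq v hv, Option.some_inj]
  cases S.parent v with
  | none =>
    refine ⟨fun e => ?_, fun e => by simp at e⟩
    rw [Option.getD_none] at e
    exact absurd (e ▸ hw) h.not_mem
  | some u => simp

lemma IsBranch.anc_iff (h : IsBranch T S r) {a v : V} (ha : a ∈ S.supp) :
    T.Anc a v ↔ S.Anc a v := by
  constructor
  · intro hav
    induction hav using Anc.head_induction_on with
    | refl => exact anc_refl a
    | @head u w hu _ ih =>
      have hw := ih.mem_supp ha
      exact ih.head ((h.parent_eq_some_iff (h.mem_of_parent hu hw) hw).1 hu)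
  · intro hav
    induction hav using Anc.head_induction_on with
    | refl => exact anc_refl a
    | @head u w hu _ ih =>
      have hw := (S.mem_of_parent hu)
      exact ih.head ((h.parent_eq_some_iff hw.1 hw.2).2 hu)

section Rotate

variable {p c : V} (h : IsBranch T S r) (hrot : IsRotationAt G S S' p c)
include h hrot

lemma IsBranch.parent_child_eq : T.parent c = some p :=
  (h.parent_eq_some_iff (S.mem_of_parent hrot.1).1 (S.mem_of_parent hrot.1).2).2 hrot.1

lemma IsBranch.rotate_parent_of_not_mem {v : V} (hv : v ∉ S.supp) :
    (T.rotate G (h.parent_child_eq hrot)).parent v = T.parent v :=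
  rotateParent_of_ne (fun e => hv (e ▸ (S.mem_of_parent hrot.1).1))
    (fun e => hv (e ▸ (S.mem_of_parent hrot.1).2))
    (fun e => hv (h.mem_of_parent e (S.mem_of_parent hrot.1).1))

lemma IsBranch.rotate_parent_of_mem {v : V} (hv : v ∈ S.supp) :
    (T.rotate G (h.parent_child_eq hrot)).parent v = some ((S'.parent v).getD r) := by
  have hpc := h.parent_child_eq hrot
  have hcS := (S.mem_of_parent hrot.1).1
  have hS' : S'.parent = rotateParent G S p c := by rw [hrot.eq_rotate]; rfl
  show rotateParent G T p c v = some ((S'.parent v).getD r)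
  rw [hS']
  by_cases hvc : v = c
  · rw [hvc, rotateParent_child, rotateParent_child, h.parent_eq p (S.mem_of_parent hrot.1).2]
  by_cases hvp : v = p
  · rw [hvp, rotateParent_parent hpc, rotateParent_parent hrot.1]; rfl
  by_cases hvc' : T.parent v = some c
  · have hvc'' := (h.parent_eq_some_iff hv hcS).1 hvc'
    have hdesc : T.descSet v = S.descSet v := Set.ext fun _ => h.anc_iff hv
    by_cases hadj : ∃ u ∈ S.descSet v, G.Adj u p
    · rw [rotateParent_of_adj hpc hvc' (hdesc ▸ hadj), rotateParent_of_adj hrot.1 hvc'' hadj]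
      rfl
    · rw [rotateParent_of_not_adj hpc hvc' (hdesc ▸ hadj),
        rotateParent_of_not_adj hrot.1 hvc'' hadj]
      rfl
  · rw [rotateParent_of_ne hvc hvp hvc', rotateParent_of_ne hvc hvp
      (fun e => hvc' ((h.parent_eq_some_iff hv hcS).2 e)), h.parent_eq v hv]

lemma IsBranch.rotate : IsBranch (T.rotate G (h.parent_child_eq hrot)) S' r where
  not_mem := hrot.2.1 ▸ h.not_mem
  parent_eq v hv := h.rotate_parent_of_mem hrot (hrot.2.1 ▸ hv)
  mem_of_parent {v w} hv hw := by
    rw [hrot.2.1] at hw ⊢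
    by_contra hvS
    exact hvS (h.mem_of_parent ((h.rotate_parent_of_not_mem hrot hvS).symm.trans hv) hw)

end Rotate

lemma IsBranch.exists_reachesIn {k : ℕ} (h : IsBranch T S r) (hS : ReachesIn G k S S') :
    ∃ T', ReachesIn G k T T' ∧ IsBranch T' S' r ∧ ∀ v ∉ S.supp, T'.parent v = T.parent v := by
  induction k generalizing T S with
  | zero => cases hS; exact ⟨T, rfl, h, fun _ _ => rfl⟩
  | succ k ih =>
    obtain ⟨S₁, ⟨p, c, hrot⟩, hS⟩ := hS
    obtain ⟨T', hk, hT', hout⟩ := ih (h.rotate hrot) hS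
    refine ⟨T', ⟨_, ⟨p, c, rotate_isRotationAt _⟩, hk⟩, hT', fun v hv => ?_⟩
    rw [hout v (hrot.2.1 ▸ hv), h.rotate_parent_of_not_mem hrot hv]

end RTree

section Main

open RTree

variable {V : Type} {G : SimpleGraph V} {U : Finset V}

lemma IsSTGOn.eq_of_parent_eq {T T' : RTree V} (h : IsSTGOn G U T) (h' : IsSTGOn G U T')
    (hpar : ∀ v ∈ U, T.parent v = T'.parent v) : T = T' := by
  refine RTree.ext (h.1.trans h'.1.symm) (funext fun v => ?_)
  by_cases hv : v ∈ U
  · exact hpar v hv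
  · rw [T.parent_eq_none v (h.1 ▸ hv), T'.parent_eq_none v (h'.1 ▸ hv)]

lemma IsSTGOn.exists_reachesIn_fix_branch
    (ih : ∀ C : Finset V, C.card < U.card → ∀ S S' : RTree V, IsSTGOn G C S →
      IsSTGOn G C S' → ∃ k, ReachesIn G k S S')
    {T T' : RTree V} (h : IsSTGOn G U T) (h' : IsSTGOn G U T') {r c c' : V} (hrU : r ∈ U)
    (hc : T.parent c = some r) (hc' : T'.parent c' = some r)
    (hcc' : T.descSet c = T'.descSet c') :
    ∃ k T₁, ReachesIn G k T T₁ ∧ (∀ v ∈ T.descSet c, T₁.parent v = T'.parent v) ∧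
      ∀ v ∉ T.descSet c, T₁.parent v = T.parent v := by
  have hsupp : (T.subtree c).supp = (T'.subtree c').supp := by
    ext v
    rw [mem_subtree_supp, mem_subtree_supp, h.1, h'.1]
    exact and_congr_right' (Set.ext_iff.1 hcc' v)
  have hbr := isBranch_subtree hc
  have hbr' := isBranch_subtree hc'
  have hcard : (T.subtree c).supp.card < U.card :=
    Finset.card_lt_card ⟨fun v hv => h.1 ▸ (mem_subtree_supp.1 hv).1,
      fun hU => hbr.not_mem (hU hrU)⟩
  obtain ⟨k, hk⟩ := ih _ hcard _ _ (h.subtree c) (hsupp ▸ h'.subtree c')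
  obtain ⟨T₁, hk₁, hT₁, hout⟩ := hbr.exists_reachesIn hk
  refine ⟨k, T₁, hk₁, fun v hv => ?_, fun v hv => hout v fun hv' => hv (mem_subtree_supp.1 hv').2⟩
  have hvS : v ∈ (T'.subtree c').supp :=
    hsupp ▸ mem_subtree_supp.2 ⟨hv.mem_supp (T.mem_of_parent hc).1, hv⟩
  rw [hT₁.parent_eq v hvS, hbr'.parent_eq v hvS]

lemma IsSTGOn.exists_reachesIn_of_common_root
    (ih : ∀ C : Finset V, C.card < U.card → ∀ S S' : RTree V, IsSTGOn G C S →
      IsSTGOn G C S' → ∃ k, ReachesIn G k S S')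
    {T T' : RTree V} (h : IsSTGOn G U T) (h' : IsSTGOn G U T') {r : V} (hrU : r ∈ U)
    (hr : T.parent r = none) (hr' : T'.parent r = none) : ∃ k, ReachesIn G k T T' := by
  classical
  induction hn : (U.filter fun v => T.parent v ≠ T'.parent v).card
    using Nat.strong_induction_on generalizing T with
  | _ n ihn =>
  by_cases hagree : ∀ v ∈ U, T.parent v = T'.parent v
  · exact ⟨0, h.eq_of_parent_eq h' hagree⟩
  push Not at hagree
  obtain ⟨v, hvU, hv⟩ := hagree
  have hvr : v ≠ r := fun e => hv (by rw [e, hr, hr'])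
  obtain ⟨c, hc, hcv⟩ := (anc_of_parent_eq_none (h.1 ▸ hrU) hr
    (h.1 ▸ hvU)).eq_or_child.resolve_left (Ne.symm hvr)
  obtain ⟨c', hc', hc'v⟩ := (anc_of_parent_eq_none (h'.1 ▸ hrU) hr'
    (h'.1 ▸ hvU)).eq_or_child.resolve_left (Ne.symm hvr)
  obtain ⟨k, T₁, hk, hin, hout⟩ := h.exists_reachesIn_fix_branch ih h' hrU hc hc'
    (h.descSet_eq_of_parent_eq_root h' hr hr' hc hc' hcv hc'v)
  have hlt : (U.filter fun u => T₁.parent u ≠ T'.parent u).card < n := by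
    rw [← hn]
    refine Finset.card_lt_card ⟨fun u hu => ?_, fun hsub => ?_⟩
    · rw [Finset.mem_filter] at hu ⊢
      by_cases huc : u ∈ T.descSet c
      · exact absurd (hin u huc) hu.2
      · exact ⟨hu.1, hout u huc ▸ hu.2⟩
    · exact (Finset.mem_filter.1 (hsub (Finset.mem_filter.2 ⟨hvU, hv⟩))).2 (hin v hcv)
  obtain ⟨l, hl⟩ := ihn _ hlt (hk.isSTGOn h) (hout r (not_anc_of_parent hc) ▸ hr) rfl
  exact ⟨k + l, hk.trans hl⟩

lemma IsSTGOn.exists_reachesIn {T₁ T₂ : RTree V} (h₁ : IsSTGOn G U T₁)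
    (h₂ : IsSTGOn G U T₂) : ∃ k, ReachesIn G k T₁ T₂ := by
  induction hn : U.card using Nat.strong_induction_on generalizing U T₁ T₂ with
  | _ n ih =>
  rcases U.eq_empty_or_nonempty with rfl | ⟨v, hv⟩
  · exact ⟨0, eq_of_supp_eq_empty h₁.1 h₂.1⟩
  obtain ⟨r, hr, hrn, -⟩ := T₂.reaches_root v (h₂.1 ▸ hv)
  obtain ⟨k, T₁', hk, h₁', hr'⟩ := h₁.exists_reachesIn_with_root r
  obtain ⟨l, hl⟩ := h₁'.exists_reachesIn_of_common_root
    (fun C hC S S' hS hS' => ih _ (hn ▸ hC) hS hS' rfl) h₂ (h₂.1 ▸ hr) hr' hrn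
  exact ⟨k + l, hk.trans hl⟩

end Main

theorem rotation_graph_connected_general {V : Type} [Fintype V]
    (G : SimpleGraph V) (T1 T2 : RTree V) (h1 : IsSTG G T1) (h2 : IsSTG G T2) :
    ∃ k : ℕ, ReachesIn G k T1 T2 :=
  IsSTGOn.exists_reachesIn h1 h2

/-- the rotation graph of the search trees on a connected graph is
connected. -/
theorem rotation_graph_connected {V : Type} [Fintype V]
    (G : SimpleGraph V) (hG : G.Connected)
    (T1 T2 : RTree V) (h1 : IsSTG G T1) (h2 : IsSTG G T2) :
    ∃ k : ℕ, ReachesIn G k T1 T2 :=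
  rotation_graph_connected_general G T1 T2 h1 h2
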